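/- Recursive feasibility core step: suppose X_N is robust M-step hold control invariant and x_{t+M} ∈ K^M_N(X_N) ∩ X. Then there exists an admissible held input u ∈ U such that for all disturbance realizations w_k ∈ W_k, the trajectory from x_{t+M} under u satisfies x_{t+M+k} ∈ X for k = 1,…,M−1 and x_{t+2M} ∈ K^M_{N−M}(X_N). In particular, membership in K^M_N(X_N) is preserved every M steps under appropriately chosen held inputs. -/

import Mathlib

/-- Robust `M`-step hold precursor set `Pre^M(S, W)`. -/
def holdPre {n m o : ℕ} (A : Matrix (Fin n) (Fin n) ℝ)
    (B : Matrix (Fin n) (Fin m) ℝ) (E : Matrix (Fin n) (Fin o) ℝ)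
    (X : Set (Fin n → ℝ)) (U : Set (Fin m → ℝ)) (W : Set (Fin o → ℝ))
    (M : ℕ) (S : Set (Fin n → ℝ)) : Set (Fin n → ℝ) :=
  {x0 | ∃ u ∈ U, ∀ w : ℕ → (Fin o → ℝ), (∀ t, w t ∈ W) →
    ∀ x : ℕ → (Fin n → ℝ), x 0 = x0 →
      (∀ t, x (t + 1) = A.mulVec (x t) + B.mulVec u + E.mulVec (w t)) →
      (∀ t, 0 < t → t < M → x t ∈ X) ∧ x M ∈ S}

/-- Controllable sets indexed by block count: `K^M_{jM}(S)`. -/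
def ctrbSet {n m o : ℕ} (A : Matrix (Fin n) (Fin n) ℝ)
    (B : Matrix (Fin n) (Fin m) ℝ) (E : Matrix (Fin n) (Fin o) ℝ)
    (X : Set (Fin n → ℝ)) (U : Set (Fin m → ℝ)) (W : Set (Fin o → ℝ))
    (M : ℕ) (S : Set (Fin n → ℝ)) : ℕ → Set (Fin n → ℝ)
  | 0 => S
  | j + 1 => holdPre A B E X U W M (ctrbSet A B E X U W M S j) ∩ X

section

variable {n m o : ℕ} (A : Matrix (Fin n) (Fin n) ℝ) (B : Matrix (Fin n) (Fin m) ℝ)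
  (E : Matrix (Fin n) (Fin o) ℝ) (X : Set (Fin n → ℝ)) (U : Set (Fin m → ℝ))
  (W : Set (Fin o → ℝ)) (M : ℕ)

theorem holdPre_mono : Monotone (holdPre A B E X U W M) := by
  rintro S T hST x0 ⟨u, hu, h⟩
  exact ⟨u, hu, fun w hw x hx0 hdyn => (h w hw x hx0 hdyn).imp_right (@hST _)⟩

theorem ctrbSet_monotone {S : Set (Fin n → ℝ)} (hSX : S ⊆ X)
    (hinv : S ⊆ holdPre A B E X U W M S) : Monotone (ctrbSet A B E X U W M S) := by
  refine monotone_nat_of_le_succ fun j => ?_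
  induction j with
  | zero => exact Set.subset_inter hinv hSX
  | succ j ih => exact Set.inter_subset_inter_left X (holdPre_mono A B E X U W M ih)

end

theorem recursive_feasibility_core_general {n m o : ℕ} (A : Matrix (Fin n) (Fin n) ℝ)
    (B : Matrix (Fin n) (Fin m) ℝ) (E : Matrix (Fin n) (Fin o) ℝ)
    (X : Set (Fin n → ℝ)) (U : Set (Fin m → ℝ)) (W : Set (Fin o → ℝ))
    (M q : ℕ) (hq : 1 ≤ q)
    (XN : Set (Fin n → ℝ)) (hXN : XN ⊆ X)
    (hinv : XN ⊆ holdPre A B E X U W M XN)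
    (x0 : Fin n → ℝ) (hx0 : x0 ∈ ctrbSet A B E X U W M XN q ∩ X) :
    ∃ u ∈ U, ∀ w : ℕ → (Fin o → ℝ), (∀ t, w t ∈ W) →
      ∀ x : ℕ → (Fin n → ℝ), x 0 = x0 →
        (∀ t, x (t + 1) = A.mulVec (x t) + B.mulVec u + E.mulVec (w t)) →
        (∀ t, 0 < t → t < M → x t ∈ X) ∧
          x M ∈ ctrbSet A B E X U W M XN (q - 1) ∧
          x M ∈ ctrbSet A B E X U W M XN q := by
  obtain ⟨j, rfl⟩ := Nat.exists_eq_add_of_le' hq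
  obtain ⟨⟨⟨u, hu, hsteer⟩, -⟩, -⟩ := hx0
  refine ⟨u, hu, fun w hw x hx0 hdyn => ?_⟩
  obtain ⟨hsafe, hland⟩ := hsteer w hw x hx0 hdyn
  have hmono := ctrbSet_monotone A B E X U W M hXN hinv (Nat.le_succ j)
  exact ⟨hsafe, hland, hmono hland⟩

/-- Recursive feasibility core step: if `X_N` is robust `M`-step hold control
invariant and the current state lies in `K^M_N(X_N) ∩ X` (with `N = qM`,
`q ≥ 1`), then there is an admissible held input `u ∈ U` such that, for every
admissible disturbance realization, the resulting trajectory stays in `X` for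
steps `1,…,M-1`, lands in `K^M_{N-M}(X_N)` at step `M`, and in particular
remains in `K^M_N(X_N)` at step `M`. -/
theorem recursive_feasibility_core {n m o : ℕ} (A : Matrix (Fin n) (Fin n) ℝ)
    (B : Matrix (Fin n) (Fin m) ℝ) (E : Matrix (Fin n) (Fin o) ℝ)
    (X : Set (Fin n → ℝ)) (U : Set (Fin m → ℝ)) (W : Set (Fin o → ℝ))
    (M q : ℕ) (hM : 0 < M) (hq : 1 ≤ q)
    (XN : Set (Fin n → ℝ)) (hXN : XN ⊆ X)
    (hinv : XN ⊆ holdPre A B E X U W M XN)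
    (x0 : Fin n → ℝ) (hx0 : x0 ∈ ctrbSet A B E X U W M XN q ∩ X) :
    ∃ u ∈ U, ∀ w : ℕ → (Fin o → ℝ), (∀ t, w t ∈ W) →
      ∀ x : ℕ → (Fin n → ℝ), x 0 = x0 →
        (∀ t, x (t + 1) = A.mulVec (x t) + B.mulVec u + E.mulVec (w t)) →
        (∀ t, 0 < t → t < M → x t ∈ X) ∧
          x M ∈ ctrbSet A B E X U W M XN (q - 1) ∧
          x M ∈ ctrbSet A B E X U W M XN q :=
  recursive_feasibility_core_general A B E X U W M q hq XN hXN hinv x0 hx0
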